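/- Let ν be a nonzero multi-index. Then ∑_{0 ≠ m ≤ ν} binom(ν, m) · Λ_{|ν| − |m|} = Λ_{|ν|}, where the sum ranges over all nonzero multi-indices m with m ≤ ν componentwise. -/

import Mathlib

/-- The order `|ν|` of a multi-index `ν : ℕ →₀ ℕ`. -/
def multiOrder (ν : ℕ →₀ ℕ) : ℕ := ν.sum fun _ n => n

/-- The ordered Bell numbers: `Λ₀ = 1` and `Λ_k = ∑_{ℓ=1}^k C(k,ℓ) Λ_{k-ℓ}` for `k ≥ 1`. -/
def orderedBell : ℕ → ℕ
  | 0 => 1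
  | (k + 1) => ∑ i ∈ Finset.range (k + 1), Nat.choose (k + 1) (i + 1) * orderedBell (k - i)
  decreasing_by exact Nat.lt_succ_of_le (Nat.sub_le k i)

/-!
Grouping the multi-indices `m ≤ ν` by their order `ℓ = |m|`, the generalized Vandermonde identity
`∑_{m ≤ ν, |m| = ℓ} binom(ν, m) = C(|ν|, ℓ)` turns `∑_{m ≤ ν} binom(ν, m) Λ_{|ν| - |m|}` into
`∑_ℓ C(|ν|, ℓ) Λ_{|ν| - ℓ}`, which is `2 Λ_{|ν|}` by the defining recurrence once `|ν| ≠ 0`.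
The term `m = 0` accounts for one copy of `Λ_{|ν|}`.
-/

open Finset

theorem Nat.sum_finsuppAntidiag_prod_choose {ι : Type*} [DecidableEq ι] (s : Finset ι)
    (n : ι → ℕ) (ℓ : ℕ) :
    ∑ μ ∈ s.finsuppAntidiag ℓ, ∏ j ∈ s, (n j).choose (μ j) = (∑ j ∈ s, n j).choose ℓ := by
  have coeff_pow (k i : ℕ) :
      PowerSeries.coeff i ((1 + PowerSeries.X : PowerSeries ℕ) ^ k) = k.choose i := by
    rw [← Polynomial.coe_X, ← Polynomial.coe_one, ← Polynomial.coe_add, ← Polynomial.coe_pow,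
      Polynomial.coeff_coe, Polynomial.coeff_one_add_X_pow, Nat.cast_id]
  have coeff_prod := PowerSeries.coeff_prod (fun j ↦ (1 + PowerSeries.X : PowerSeries ℕ) ^ n j) ℓ s
  simp only [coeff_pow, prod_pow_eq_pow_sum] at coeff_prod
  exact coeff_prod.symm

namespace Finsupp

variable {σ : Type*} [DecidableEq σ]

theorem sum_Iic_filter_degree_prod_choose (ν : σ →₀ ℕ) (ℓ : ℕ) :
    ∑ m ∈ Iic ν with m.degree = ℓ, ∏ j ∈ ν.support, (ν j).choose (m j) = ν.degree.choose ℓ := by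
  have slice : {m ∈ Iic ν | m.degree = ℓ} = {m ∈ ν.support.finsuppAntidiag ℓ | m ≤ ν} := by
    ext m
    simp only [mem_filter, mem_Iic, mem_finsuppAntidiag']
    exact ⟨fun ⟨hle, hm⟩ ↦ ⟨⟨hm, support_mono hle⟩, hle⟩, fun ⟨⟨hm, _⟩, hle⟩ ↦ ⟨hle, hm⟩⟩
  rw [slice, degree_apply, ← Nat.sum_finsuppAntidiag_prod_choose]
  refine sum_filter_of_ne fun m hm hprod j ↦ ?_
  by_cases hj : j ∈ ν.support
  · exact Nat.choose_ne_zero_iff.1 (Finset.prod_ne_zero_iff.1 hprod j hj)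
  · rw [notMem_support_iff.1 fun hmj ↦ hj ((mem_finsuppAntidiag.1 hm).2 hmj)]
    exact Nat.zero_le _

theorem sum_Iic_prod_choose_smul {M : Type*} [AddCommMonoid M] (ν : σ →₀ ℕ) (f : ℕ → M) :
    ∑ m ∈ Iic ν, (∏ j ∈ ν.support, (ν j).choose (m j)) • f m.degree
      = ∑ ℓ ∈ range (ν.degree + 1), ν.degree.choose ℓ • f ℓ := by
  have maps (m) (hm : m ∈ Iic ν) : m.degree ∈ range (ν.degree + 1) :=
    mem_range_succ_iff.2 (degree_mono (mem_Iic.1 hm))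
  rw [← sum_fiberwise_of_maps_to maps]
  refine Finset.sum_congr rfl fun ℓ _ ↦ ?_
  rw [← sum_Iic_filter_degree_prod_choose, sum_smul]
  exact Finset.sum_congr rfl fun m hm ↦ by rw [(mem_filter.1 hm).2]

end Finsupp

theorem sum_range_choose_mul_orderedBell {k : ℕ} (hk : k ≠ 0) :
    ∑ ℓ ∈ range (k + 1), k.choose ℓ * orderedBell (k - ℓ) = 2 * orderedBell k := by
  obtain ⟨n, rfl⟩ := Nat.exists_eq_add_one_of_ne_zero hk
  rw [sum_range_succ', two_mul]
  congr 1
  · rw [orderedBell.eq_2]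
    simp only [Nat.add_sub_add_right]
  · rw [Nat.choose_zero_right, Nat.sub_zero, one_mul]

/-- `∑_{0 ≠ m ≤ ν} binom(ν, m) Λ_{|ν| - |m|} = Λ_{|ν|}` for `ν ≠ 0`. -/
theorem stmt5 (ν : ℕ →₀ ℕ) (hν : ν ≠ 0) :
    ∑ m ∈ (Finset.Iic ν).erase 0,
        (∏ j ∈ ν.support, Nat.choose (ν j) (m j)) * orderedBell (multiOrder ν - multiOrder m)
      = orderedBell (multiOrder ν) := by
  have hmultiOrder : multiOrder = Finsupp.degree := rfl
  have hk : ν.degree ≠ 0 := (Finsupp.degree_eq_zero_iff ν).not.2 hν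
  have total := Finsupp.sum_Iic_prod_choose_smul ν fun ℓ ↦ orderedBell (ν.degree - ℓ)
  rw [← Finset.add_sum_erase _ _ (mem_Iic.2 (zero_le (a := ν)))] at total
  simp only [smul_eq_mul, sum_range_choose_mul_orderedBell hk, Finsupp.coe_zero, Pi.zero_apply,
    Nat.choose_zero_right, prod_const_one, map_zero, tsub_zero] at total
  rw [hmultiOrder]
  omega
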